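/- Let a ≤ 0, n ≥ 1, and let f, g : [0,∞) → ℝ be bounded measurable functions with correlation measure ϖ*_{f,g} as above. Define τ_{f,g}(t) = (1/2)∫₀ᵗ (2 f(s)g(s) + f(s)ε_g(s) + ε_f(s)g(s)) ds, where ε_f(t) = a∫₀ᵗ e^{a(t-v)} f(v)(1+e^{2av}) dv. Then sup_{0≤t≤n} |τ_{f,g}(t)| ≤ 4·ϖ*_{f,g}. -/

import Mathlib

open MeasureTheory Real

/-- ε_f(t) = a ∫₀ᵗ e^{a(t-v)} f(v)(1+e^{2av}) dv. -/
noncomputable def epsTransform (a : ℝ) (f : ℝ → ℝ) : ℝ → ℝ := fun t =>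
  a * ∫ v in (0:ℝ)..t, Real.exp (a * (t - v)) * f v * (1 + Real.exp (2 * a * v))

/-- τ_{f,g}(t) = (1/2) ∫₀ᵗ (2 f g + f ε_g + ε_f g) ds. -/
noncomputable def tauTransform (a : ℝ) (f g : ℝ → ℝ) : ℝ → ℝ := fun t =>
  (1 / 2) * ∫ s in (0:ℝ)..t,
    (2 * f s * g s + f s * epsTransform a g s + epsTransform a f s * g s)

/-!
Swapping the order of integration over the triangle `0 ≤ w ≤ s ≤ t` turns `∫₀ᵗ f ε_g` into
`a ∫₀ᵗ e^{aw} (∫₀^{t-w} f(u+w) g(u) (1 + e^{2au}) du) dw`. The inner integral is a shifted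
correlation against the decreasing weight `1 + e^{2au} ≤ 2`, so integrating by parts against the
primitive of the correlation bounds it by `2W`. As `∫₀ᵗ (-a) e^{aw} dw ≤ 1`, this gives
`|∫₀ᵗ f ε_g| ≤ 2W`, symmetrically `|∫₀ᵗ ε_f g| ≤ 2W`, and `|τ| ≤ (2W + 2W + 2W) / 2 ≤ 4W`.
-/

open Set Function

lemma abs_mul_le_of_abs_le {f g : ℝ → ℝ} {Cf Cg : ℝ} (hfb : ∀ x, |f x| ≤ Cf)
    (hgb : ∀ x, |g x| ≤ Cg) (x y : ℝ) : |f x * g y| ≤ Cf * Cg := by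
  rw [abs_mul]
  exact mul_le_mul (hfb x) (hgb y) (abs_nonneg _) ((abs_nonneg _).trans (hfb x))

lemma intervalIntegrable_of_abs_le {h : ℝ → ℝ} {C : ℝ} (hm : Measurable h)
    (hb : ∀ x, |h x| ≤ C) (c d : ℝ) : IntervalIntegrable h volume c d :=
  intervalIntegrable_iff.2 <| Measure.integrableOn_of_bounded (M := C) measure_Ioc_lt_top.ne
    hm.aestronglyMeasurable (ae_of_all _ hb)

lemma integral_mul_exp_mul (a t : ℝ) :
    ∫ w in (0:ℝ)..t, a * exp (a * w) = exp (a * t) - 1 := by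
  have hderiv : deriv (fun w => exp (a * w)) = fun w => a * exp (a * w) := by
    ext w
    rw [((hasDerivAt_id' w).const_mul a).exp.deriv]
    ring
  rw [intervalIntegral.integral_deriv_eq_sub' _ hderiv (fun _ _ => by fun_prop)
    (by fun_prop), mul_zero, exp_zero]

theorem abs_integral_mul_le_of_deriv_nonpos {h φ : ℝ → ℝ} {a b W : ℝ} (hab : a ≤ b)
    (hh : IntervalIntegrable h volume a b) (hφ : ContDiff ℝ 1 φ)
    (hφ' : ∀ x ∈ Icc a b, deriv φ x ≤ 0) (hφb : 0 ≤ φ b)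
    (hW : ∀ r ∈ Icc a b, |∫ u in a..r, h u| ≤ W) :
    |∫ u in a..b, h u * φ u| ≤ W * φ a := by
  set F := fun r => ∫ u in a..r, h u
  have hF : AbsolutelyContinuousOnInterval F a b :=
    hh.absolutelyContinuousOnInterval_intervalIntegral left_mem_uIcc
  have hφac : AbsolutelyContinuousOnInterval φ a b :=
    hφ.contDiffOn.absolutelyContinuousOnInterval
  have hdφ : Continuous (deriv φ) := hφ.continuous_deriv le_rfl
  have hparts : ∫ u in a..b, h u * φ u = φ b * F b - ∫ u in a..b, deriv φ u * F u := by
    have hderivF : ∫ u in a..b, h u * φ u = ∫ u in a..b, φ u * deriv F u := by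
      refine intervalIntegral.integral_congr_ae ?_
      filter_upwards [hh.ae_hasDerivAt_integral] with u hu hu'
      rw [(hu (uIoc_subset_uIcc hu') a left_mem_uIcc).deriv, mul_comm]
    rw [hderivF, hφac.integral_mul_deriv_eq_deriv_mul hF]
    simp [F]
  have hvar : ∫ u in a..b, -deriv φ u = φ a - φ b := by
    rw [intervalIntegral.integral_neg, intervalIntegral.integral_deriv_eq_sub
      (fun x _ => hφ.differentiable one_ne_zero x) (hdφ.intervalIntegrable _ _)]
    ring
  have hbound : |∫ u in a..b, deriv φ u * F u| ≤ W * (φ a - φ b) := by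
    rw [← hvar, ← intervalIntegral.integral_const_mul, ← Real.norm_eq_abs]
    refine intervalIntegral.norm_integral_le_of_norm_le hab (ae_of_all _ fun u hu => ?_)
      ((hdφ.neg.intervalIntegrable _ _).const_mul W)
    rw [Real.norm_eq_abs, abs_mul, abs_of_nonpos (hφ' u (Ioc_subset_Icc_self hu)), mul_comm]
    exact mul_le_mul_of_nonneg_right (hW u (Ioc_subset_Icc_self hu))
      (neg_nonneg.2 (hφ' u (Ioc_subset_Icc_self hu)))
  calc |∫ u in a..b, h u * φ u|
      ≤ φ b * |F b| + |∫ u in a..b, deriv φ u * F u| := by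
        rw [hparts]; refine (abs_sub _ _).trans ?_; rw [abs_mul, abs_of_nonneg hφb]
    _ ≤ φ b * W + W * (φ a - φ b) := by gcongr; exact hW b (right_mem_Icc.2 hab)
    _ = W * φ a := by ring

theorem integral_integral_triangle_swap {E : Type*} [NormedAddCommGroup E] [NormedSpace ℝ E]
    {K : ℝ → ℝ → E} {a b : ℝ} (hab : a ≤ b)
    (hK : IntegrableOn (uncurry K) (Icc a b ×ˢ Icc a b)) :
    ∫ s in a..b, ∫ w in a..s, K s w = ∫ w in a..b, ∫ s in w..b, K s w := by
  set T := {p : ℝ × ℝ | a < p.2 ∧ p.2 ≤ p.1 ∧ p.1 ≤ b}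
  have hT : MeasurableSet T :=
    (measurableSet_lt measurable_const measurable_snd).inter
      ((measurableSet_le measurable_snd measurable_fst).inter
        (measurableSet_le measurable_fst measurable_const))
  have hG : Integrable (T.indicator (uncurry K)) (volume.prod volume) := by
    rw [← Measure.volume_eq_prod, integrable_indicator_iff hT]
    exact hK.mono_set fun p hp => ⟨⟨hp.1.le.trans hp.2.1, hp.2.2⟩, ⟨hp.1.le, hp.2.1.trans hp.2.2⟩⟩
  have hleft : ∀ s, ∫ w, T.indicator (uncurry K) (s, w) =
      (Ioc a b).indicator (fun s => ∫ w in a..s, K s w) s := by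
    intro s
    by_cases hs : s ∈ Ioc a b
    · have : (fun w => T.indicator (uncurry K) (s, w)) = (Ioc a s).indicator (K s) := by
        ext w; simp [T, indicator, hs.2]
      rw [indicator_of_mem hs, this, integral_indicator measurableSet_Ioc,
        intervalIntegral.integral_of_le hs.1.le]
    · have : (fun w => T.indicator (uncurry K) (s, w)) = 0 := by
        ext w; simp only [T, indicator, mem_ofPred_eq, Pi.zero_apply]
        grind
      rw [indicator_of_notMem hs, this, integral_zero']
  have hright : ∀ w, ∫ s, T.indicator (uncurry K) (s, w) =
      (Ioc a b).indicator (fun w => ∫ s in w..b, K s w) w := by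
    intro w
    by_cases hw : w ∈ Ioc a b
    · have : (fun s => T.indicator (uncurry K) (s, w)) = (Icc w b).indicator (K · w) := by
        ext s; simp [T, indicator, hw.1]
      rw [indicator_of_mem hw, this, integral_indicator measurableSet_Icc,
        integral_Icc_eq_integral_Ioc, intervalIntegral.integral_of_le hw.2]
    · have : (fun s => T.indicator (uncurry K) (s, w)) = 0 := by
        ext s; simp only [T, indicator, mem_ofPred_eq, Pi.zero_apply]
        grind
      rw [indicator_of_notMem hw, this, integral_zero']
  simp only [intervalIntegral.integral_of_le hab]
  rw [← integral_indicator measurableSet_Ioc, ← integral_indicator measurableSet_Ioc]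
  simp only [← hleft, ← hright]
  exact integral_integral_swap hG

lemma continuous_epsTransform (a : ℝ) {g : ℝ → ℝ}
    (hg : ∀ c d, IntervalIntegrable g volume c d) : Continuous (epsTransform a g) := by
  have hint : ∀ c d, IntervalIntegrable
      (fun v => exp (-(a * v)) * g v * (1 + exp (2 * a * v))) volume c d := fun c d =>
    ((hg c d).continuousOn_mul (Continuous.continuousOn (by fun_prop))).mul_continuousOn
      (Continuous.continuousOn (by fun_prop))
  have hprim := intervalIntegral.continuous_primitive hint 0
  have heq : epsTransform a g = fun t => a * (exp (a * t) *
      ∫ v in (0:ℝ)..t, exp (-(a * v)) * g v * (1 + exp (2 * a * v))) := by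
    ext t
    rw [epsTransform, ← intervalIntegral.integral_const_mul (exp (a * t))]
    congr 1
    refine intervalIntegral.integral_congr fun v _ => ?_
    rw [mul_sub, sub_eq_add_neg, exp_add]
    ring
  rw [heq]
  fun_prop

lemma epsTransform_eq_integral_comp_sub (a : ℝ) (g : ℝ → ℝ) (s : ℝ) :
    epsTransform a g s =
      a * ∫ w in (0:ℝ)..s, exp (a * w) * g (s - w) * (1 + exp (2 * a * (s - w))) := by
  have := intervalIntegral.integral_comp_sub_left
    (fun w => exp (a * w) * g (s - w) * (1 + exp (2 * a * (s - w)))) (a := 0) (b := s) s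
  simp only [sub_sub_cancel, sub_self, sub_zero] at this
  rw [epsTransform, this]

lemma integral_mul_epsTransform_eq (a : ℝ) {t Cf Cg : ℝ} (ht : 0 ≤ t) {f g : ℝ → ℝ}
    (hf : Measurable f) (hg : Measurable g) (hfb : ∀ x, |f x| ≤ Cf) (hgb : ∀ x, |g x| ≤ Cg) :
    ∫ s in (0:ℝ)..t, f s * epsTransform a g s =
      ∫ w in (0:ℝ)..t, a * exp (a * w) *
        ∫ u in (0:ℝ)..(t - w), f (u + w) * g u * (1 + exp (2 * a * u)) := by
  set K : ℝ → ℝ → ℝ := fun s w =>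
    f s * g (s - w) * (a * exp (a * w) * (1 + exp (2 * a * (s - w))))
  have hsquare : IsCompact (Icc 0 t ×ˢ Icc 0 t) := isCompact_Icc.prod isCompact_Icc
  have hK : IntegrableOn (uncurry K) (Icc 0 t ×ˢ Icc 0 t) := by
    refine IntegrableOn.mul_continuousOn ?_ (by fun_prop) hsquare
    refine Measure.integrableOn_of_bounded (M := Cf * Cg) hsquare.measure_lt_top.ne
      (by fun_prop) (ae_of_all _ fun p => abs_mul_le_of_abs_le hfb hgb _ _)
  calc ∫ s in (0:ℝ)..t, f s * epsTransform a g s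
      = ∫ s in (0:ℝ)..t, ∫ w in (0:ℝ)..s, K s w := by
        refine intervalIntegral.integral_congr fun s _ => ?_
        rw [epsTransform_eq_integral_comp_sub, ← intervalIntegral.integral_const_mul,
          ← intervalIntegral.integral_const_mul]
        exact intervalIntegral.integral_congr fun w _ => by ring
    _ = ∫ w in (0:ℝ)..t, ∫ s in w..t, K s w := integral_integral_triangle_swap ht hK
    _ = _ := by
        refine intervalIntegral.integral_congr fun w _ => ?_
        have := intervalIntegral.integral_comp_sub_right
          (fun u => f (u + w) * g u * (1 + exp (2 * a * u))) (a := w) (b := t) w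
        simp only [sub_add_cancel, sub_self] at this
        rw [← this, ← intervalIntegral.integral_const_mul]
        exact intervalIntegral.integral_congr fun s _ => by ring

lemma tauTransform_eq_add (a t : ℝ) {f g : ℝ → ℝ} {Cf Cg : ℝ} (hf : Measurable f)
    (hg : Measurable g) (hfb : ∀ x, |f x| ≤ Cf) (hgb : ∀ x, |g x| ≤ Cg) :
    tauTransform a f g t = (∫ s in (0:ℝ)..t, f s * g s) +
      (1 / 2) * ((∫ s in (0:ℝ)..t, f s * epsTransform a g s) +
        ∫ s in (0:ℝ)..t, epsTransform a f s * g s) := by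
  have hfi := intervalIntegrable_of_abs_le hf hfb
  have hgi := intervalIntegrable_of_abs_le hg hgb
  have hfg : IntervalIntegrable (fun s => f s * g s) volume 0 t :=
    intervalIntegrable_of_abs_le (hf.mul hg) (fun x => abs_mul_le_of_abs_le hfb hgb x x) 0 t
  have hεf := (continuous_epsTransform a hfi).continuousOn (s := uIcc 0 t)
  have hεg := (continuous_epsTransform a hgi).continuousOn (s := uIcc 0 t)
  simp only [tauTransform, mul_assoc (2:ℝ)]
  rw [intervalIntegral.integral_add ((hfg.const_mul 2).add ((hfi 0 t).mul_continuousOn hεg))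
    ((hgi 0 t).continuousOn_mul hεf), intervalIntegral.integral_add (hfg.const_mul 2)
    ((hfi 0 t).mul_continuousOn hεg), intervalIntegral.integral_const_mul]
  ring

theorem abs_integral_mul_epsTransform_le {a t W Cf Cg : ℝ} (ha : a ≤ 0) (ht : 0 ≤ t)
    {f g : ℝ → ℝ} (hf : Measurable f) (hg : Measurable g)
    (hfb : ∀ x, |f x| ≤ Cf) (hgb : ∀ x, |g x| ≤ Cg)
    (hW : ∀ v ∈ Icc (0:ℝ) t, ∀ r ∈ Icc (0:ℝ) (t - v), |∫ u in (0:ℝ)..r, f (u + v) * g u| ≤ W) :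
    |∫ s in (0:ℝ)..t, f s * epsTransform a g s| ≤ 2 * W := by
  have hW0 : 0 ≤ W := (abs_nonneg _).trans (hW 0 (left_mem_Icc.2 ht) 0 (by simp [ht]))
  have hinner : ∀ w ∈ Icc (0:ℝ) t,
      |∫ u in (0:ℝ)..(t - w), f (u + w) * g u * (1 + exp (2 * a * u))| ≤ 2 * W := by
    intro w hw
    have hderiv : ∀ x, deriv (fun u => 1 + exp (2 * a * u)) x = exp (2 * a * x) * (2 * a) :=
      fun x => by rw [(((hasDerivAt_id' x).const_mul (2 * a)).exp.const_add 1).deriv, mul_one]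
    have := abs_integral_mul_le_of_deriv_nonpos (sub_nonneg.2 hw.2)
      (intervalIntegrable_of_abs_le (hf.comp (measurable_add_const w) |>.mul hg)
        (fun x => abs_mul_le_of_abs_le hfb hgb (x + w) x) 0 _)
      (φ := fun u => 1 + exp (2 * a * u)) (by fun_prop)
      (fun x _ => hderiv x ▸ mul_nonpos_of_nonneg_of_nonpos (exp_pos _).le (by linarith))
      (by positivity) (hW w hw)
    simpa [mul_comm, one_add_one_eq_two] using this
  rw [integral_mul_epsTransform_eq a ht hf hg hfb hgb, ← Real.norm_eq_abs]
  calc _ ≤ ∫ w in (0:ℝ)..t, -(a * exp (a * w)) * (2 * W) := by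
        refine intervalIntegral.norm_integral_le_of_norm_le ht (ae_of_all _ fun w hw => ?_)
          (Continuous.intervalIntegrable (by fun_prop) _ _)
        rw [Real.norm_eq_abs, abs_mul, abs_of_nonpos
          (mul_nonpos_of_nonpos_of_nonneg ha (exp_pos _).le)]
        exact mul_le_mul_of_nonneg_left (hinner w (Ioc_subset_Icc_self hw))
          (neg_nonneg.2 (mul_nonpos_of_nonpos_of_nonneg ha (exp_pos _).le))
    _ = (1 - exp (a * t)) * (2 * W) := by
        rw [intervalIntegral.integral_mul_const, intervalIntegral.integral_neg,
          integral_mul_exp_mul]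
        ring
    _ ≤ 2 * W := by nlinarith [exp_pos (a * t)]

/-- Lemma A.1 (first part) of the paper; `W` bounds both shifted-correlation families whose
maximum is ϖ*_{f,g}. -/
theorem tau_bound_general (a : ℝ) (ha : a ≤ 0) (n : ℝ)
    (f g : ℝ → ℝ) (hf : Measurable f) (hg : Measurable g)
    (hfb : ∃ C, ∀ x, |f x| ≤ C) (hgb : ∃ C, ∀ x, |g x| ≤ C)
    (W : ℝ)
    (hW1 : ∀ v ∈ Set.Icc (0:ℝ) n, ∀ t ∈ Set.Icc (0:ℝ) (n - v),
      |∫ u in (0:ℝ)..t, f (u + v) * g u| ≤ W)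
    (hW2 : ∀ v ∈ Set.Icc (0:ℝ) n, ∀ t ∈ Set.Icc (0:ℝ) (n - v),
      |∫ u in (0:ℝ)..t, g (u + v) * f u| ≤ W) :
    ∀ t ∈ Set.Icc (0:ℝ) n, |tauTransform a f g t| ≤ 4 * W := by
  rintro t ⟨ht, htn⟩
  obtain ⟨Cf, hfb⟩ := hfb
  obtain ⟨Cg, hgb⟩ := hgb
  have hW_restrict : ∀ {φ ψ : ℝ → ℝ}, (∀ v ∈ Icc (0:ℝ) n, ∀ r ∈ Icc (0:ℝ) (n - v),
      |∫ u in (0:ℝ)..r, φ (u + v) * ψ u| ≤ W) →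
      ∀ v ∈ Icc (0:ℝ) t, ∀ r ∈ Icc (0:ℝ) (t - v), |∫ u in (0:ℝ)..r, φ (u + v) * ψ u| ≤ W :=
    fun h v hv r hr => h v ⟨hv.1, hv.2.trans htn⟩ r ⟨hr.1, hr.2.trans (by linarith)⟩
  have hfg : |∫ s in (0:ℝ)..t, f s * g s| ≤ W := by
    simpa using hW_restrict hW1 0 (left_mem_Icc.2 ht) t (by simp [ht])
  have hfεg := abs_integral_mul_epsTransform_le ha ht hf hg hfb hgb (hW_restrict hW1)
  have hgεf := abs_integral_mul_epsTransform_le ha ht hg hf hgb hfb (hW_restrict hW2)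
  simp only [mul_comm (g _) (epsTransform a f _)] at hgεf
  rw [abs_le] at hfg hfεg hgεf
  rw [tauTransform_eq_add a t hf hg hfb hgb, abs_le]
  constructor <;> linarith

/-- Lemma A.1 (first part): sup_{0≤t≤n} |τ_{f,g}(t)| ≤ 4 ϖ*_{f,g}; `W` is an upper
bound on both shifted-correlation families defining ϖ*_{f,g}. -/
theorem tau_bound (a : ℝ) (ha : a ≤ 0) (n : ℝ) (hn : 1 ≤ n)
    (f g : ℝ → ℝ) (hf : Measurable f) (hg : Measurable g)
    (hfb : ∃ C, ∀ x, |f x| ≤ C) (hgb : ∃ C, ∀ x, |g x| ≤ C)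
    (W : ℝ)
    (hW1 : ∀ v ∈ Set.Icc (0:ℝ) n, ∀ t ∈ Set.Icc (0:ℝ) (n - v),
      |∫ u in (0:ℝ)..t, f (u + v) * g u| ≤ W)
    (hW2 : ∀ v ∈ Set.Icc (0:ℝ) n, ∀ t ∈ Set.Icc (0:ℝ) (n - v),
      |∫ u in (0:ℝ)..t, g (u + v) * f u| ≤ W) :
    ∀ t ∈ Set.Icc (0:ℝ) n, |tauTransform a f g t| ≤ 4 * W :=
  tau_bound_general a ha n f g hf hg hfb hgb W hW1 hW2
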